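/- Let 𝒜 ⊂ M(N,M) and ℬ ⊂ M(M,N) be finite sets of matrices, and suppose there exists a periodic sequence {B̄ₙ ∈ ℬ} such that ‖AₙB̄ₙ⋯A₁B̄₁‖ → 0 as n → ∞ for every sequence {Aₙ ∈ 𝒜}. Then there exist constants C > 0 and λ ∈ (0,1) such that ‖AₙB̄ₙ⋯A₁B̄₁‖ ≤ Cλⁿ for all n ≥ 1 and all sequences {Aₙ ∈ 𝒜}. -/
import Mathlib


def prodAB {N M : ℕ} (A : ℕ → Matrix (Fin N) (Fin M) ℝ)
    (B : ℕ → Matrix (Fin M) (Fin N) ℝ) : ℕ → Matrix (Fin N) (Fin N) ℝ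
  | 0 => 1
  | n + 1 => (A (n + 1) * B (n + 1)) * prodAB A B n

/-- Partial product of the factors `A i * B i` for `i` ranging over `m+1, …, m+k`. -/
def tprodAux {N M : ℕ} (A : ℕ → Matrix (Fin N) (Fin M) ℝ)
    (B : ℕ → Matrix (Fin M) (Fin N) ℝ) (m : ℕ) : ℕ → Matrix (Fin N) (Fin N) ℝ
  | 0 => 1
  | k + 1 => (A (m + k + 1) * B (m + k + 1)) * tprodAux A B m k

lemma prodAB_add {N M : ℕ} (A : ℕ → Matrix (Fin N) (Fin M) ℝ)
    (B : ℕ → Matrix (Fin M) (Fin N) ℝ) (m k : ℕ) :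
    prodAB A B (m + k) = tprodAux A B m k * prodAB A B m := by
  induction k with
  | zero => simp [tprodAux]
  | succ k ih =>
      have h : m + (k + 1) = (m + k) + 1 := rfl
      rw [h]
      show (A (m + k + 1) * B (m + k + 1)) * prodAB A B (m + k) = _
      rw [ih]
      show _ = ((A (m + k + 1) * B (m + k + 1)) * tprodAux A B m k) * prodAB A B m
      rw [mul_assoc]

lemma prodAB_congr {N M : ℕ} (A A' : ℕ → Matrix (Fin N) (Fin M) ℝ)
    (B : ℕ → Matrix (Fin M) (Fin N) ℝ) (k : ℕ) (h : ∀ i, i ≤ k → A i = A' i) :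
    prodAB A B k = prodAB A' B k := by
  induction k with
  | zero => rfl
  | succ k ih =>
      show (A (k + 1) * B (k + 1)) * prodAB A B k = (A' (k + 1) * B (k + 1)) * prodAB A' B k
      rw [h (k + 1) le_rfl, ih (fun i hi => h i (hi.trans (Nat.le_succ k)))]

lemma per_mul {M N : ℕ} {B : ℕ → Matrix (Fin M) (Fin N) ℝ} {p : ℕ}
    (hper : ∀ n, B (n + p) = B n) : ∀ q i, B (q * p + i) = B i := by
  intro q
  induction q with
  | zero => intro i; simp
  | succ q ih =>
      intro i
      have h : (q + 1) * p + i = (q * p + i) + p := by ring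
      rw [h, hper, ih]

lemma tprodAux_shift {N M : ℕ} (A : ℕ → Matrix (Fin N) (Fin M) ℝ)
    {B : ℕ → Matrix (Fin M) (Fin N) ℝ} {p : ℕ} (hper : ∀ n, B (n + p) = B n)
    (q k : ℕ) :
    tprodAux A B (q * p) k = prodAB (fun i => A (q * p + i)) B k := by
  induction k with
  | zero => rfl
  | succ k ih =>
      have hB : B (q * p + k + 1) = B (k + 1) := by
        rw [Nat.add_assoc]; exact per_mul hper q (k + 1)
      show (A (q * p + k + 1) * B (q * p + k + 1)) * tprodAux A B (q * p) k = _
      rw [hB, ih]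
      rfl

lemma tprodAux_bound {N M : ℕ} (ν : Matrix (Fin N) (Fin N) ℝ → ℝ)
    (hnonneg : ∀ X, 0 ≤ ν X) (hsub : ∀ X Y, ν (X * Y) ≤ ν X * ν Y)
    (A : ℕ → Matrix (Fin N) (Fin M) ℝ) (B : ℕ → Matrix (Fin M) (Fin N) ℝ)
    (ρ D₀ : ℝ) (hρ0 : 0 ≤ ρ) (hρ : ∀ j, ν (A j * B j) ≤ ρ)
    (hD : ν 1 ≤ D₀) (m : ℕ) : ∀ k, ν (tprodAux A B m k) ≤ D₀ * ρ ^ k := by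
  intro k
  induction k with
  | zero => simpa [tprodAux] using hD
  | succ k ih =>
      show ν ((A (m + k + 1) * B (m + k + 1)) * tprodAux A B m k) ≤ _
      calc ν ((A (m + k + 1) * B (m + k + 1)) * tprodAux A B m k)
          ≤ ν (A (m + k + 1) * B (m + k + 1)) * ν (tprodAux A B m k) := hsub _ _
        _ ≤ ρ * (D₀ * ρ ^ k) := mul_le_mul (hρ _) ih (hnonneg _) hρ0
        _ = D₀ * ρ ^ (k + 1) := by ring

theorem stmt_4 (N M : ℕ) (ν : Matrix (Fin N) (Fin N) ℝ → ℝ)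
    (hnonneg : ∀ X, 0 ≤ ν X) (hzero : ∀ X, ν X = 0 ↔ X = 0)
    (htri : ∀ X Y, ν (X + Y) ≤ ν X + ν Y)
    (hsmul : ∀ (c : ℝ) (X), ν (c • X) = |c| * ν X)
    (hsub : ∀ X Y, ν (X * Y) ≤ ν X * ν Y)
    (𝒜 : Finset (Matrix (Fin N) (Fin M) ℝ)) (ℬ : Finset (Matrix (Fin M) (Fin N) ℝ))
    (Bb : ℕ → Matrix (Fin M) (Fin N) ℝ) (hBb : ∀ n, Bb n ∈ ℬ)
    (p : ℕ) (hp : 0 < p) (hper : ∀ n, Bb (n + p) = Bb n)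
    (hconv : ∀ A : ℕ → Matrix (Fin N) (Fin M) ℝ, (∀ n, A n ∈ 𝒜) →
      Filter.Tendsto (fun n => ν (prodAB A Bb n)) Filter.atTop (nhds 0)) :
    ∃ C > 0, ∃ lam : ℝ, 0 < lam ∧ lam < 1 ∧
      ∀ A : ℕ → Matrix (Fin N) (Fin M) ℝ, (∀ n, A n ∈ 𝒜) →
        ∀ n, 1 ≤ n → ν (prodAB A Bb n) ≤ C * lam ^ n := by
  classical
  rcases Finset.eq_empty_or_nonempty 𝒜 with hAe | hAne
  · refine ⟨1, one_pos, 1/2, by norm_num, by norm_num, fun A hA => ?_⟩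
    exact absurd (hA 0) (by simp [hAe])
  -- a uniform bound ρ for ν (a * Bb i)
  set ρ : ℝ := 1 + ∑ x ∈ 𝒜 ×ˢ Finset.range p, ν (x.1 * Bb x.2) with hρdef
  have hsum0 : 0 ≤ ∑ x ∈ 𝒜 ×ˢ Finset.range p, ν (x.1 * Bb x.2) :=
    Finset.sum_nonneg fun x _ => hnonneg _
  have hρ1 : 1 ≤ ρ := by simp only [hρdef]; linarith
  have hρ0 : 0 ≤ ρ := by linarith
  have hmod : ∀ i, Bb i = Bb (i % p) := by
    intro i
    have h1 : Bb (i / p * p + i % p) = Bb (i % p) := per_mul hper (i / p) (i % p)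
    have h2 : i / p * p + i % p = i := by
      have h := Nat.div_add_mod i p
      have h' : i / p * p = p * (i / p) := Nat.mul_comm _ _
      omega
    rw [h2] at h1; exact h1
  have hρ : ∀ a ∈ 𝒜, ∀ i, ν (a * Bb i) ≤ ρ := by
    intro a ha i
    have hmem : (a, i % p) ∈ 𝒜 ×ˢ Finset.range p :=
      Finset.mem_product.mpr ⟨ha, Finset.mem_range.mpr (Nat.mod_lt i hp)⟩
    have := Finset.single_le_sum (f := fun x : Matrix (Fin N) (Fin M) ℝ × ℕ => ν (x.1 * Bb x.2))
      (fun x _ => hnonneg _) hmem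
    rw [hmod i]
    simp only [hρdef]; linarith [this]
  set D₀ : ℝ := max 1 (ν 1) with hD₀def
  have hD₀1 : 1 ≤ D₀ := le_max_left _ _
  have hD₀ : ν 1 ≤ D₀ := le_max_right _ _
  have hD₀0 : 0 < D₀ := lt_of_lt_of_le one_pos hD₀1
  -- compactness: there is a uniform horizon K
  have hKex : ∃ K : ℕ, 1 ≤ K ∧ ∀ A : ℕ → Matrix (Fin N) (Fin M) ℝ, (∀ n, A n ∈ 𝒜) →
      ∃ n, 1 ≤ n ∧ n ≤ K ∧ ν (prodAB A Bb (n * p)) < 1/2 := by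
    let Y := {x : Matrix (Fin N) (Fin M) ℝ // x ∈ 𝒜}
    let X := ℕ → Y
    let val : X → ℕ → Matrix (Fin N) (Fin M) ℝ := fun c i => (c i : Matrix (Fin N) (Fin M) ℝ)
    let U : ℕ → Set X := fun n => {c | ν (prodAB (val c) Bb ((n + 1) * p)) < 1/2}
    have hUopen : ∀ n, IsOpen (U n) := by
      intro n
      set m := (n + 1) * p + 1 with hm
      let π : X → (Fin m → Y) := fun c i => c i
      have hπ : Continuous π := continuous_pi fun i => continuous_apply _
      have hU : U n = π ⁻¹' {w : Fin m → Y |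
          ν (prodAB (fun i => if h : i < m then (w ⟨i, h⟩ : Matrix (Fin N) (Fin M) ℝ) else 0)
            Bb ((n + 1) * p)) < 1/2} := by
        ext c
        simp only [Set.mem_preimage, Set.mem_setOf_eq, U]
        have heq : prodAB (val c) Bb ((n + 1) * p)
            = prodAB (fun i => if h : i < m then ((π c) ⟨i, h⟩ : Matrix (Fin N) (Fin M) ℝ) else 0)
              Bb ((n + 1) * p) := by
          apply prodAB_congr
          intro i hi
          have hlt : i < m := by omega
          simp [hlt, val, π]
        rw [heq]
      rw [hU]
      exact hπ.isOpen_preimage _ (isOpen_discrete _)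
    have hcover : (Set.univ : Set X) ⊆ ⋃ n, U n := by
      intro c _
      have hAc : ∀ n, val c n ∈ 𝒜 := fun n => (c n).2
      have := (hconv (val c) hAc).eventually_lt_const (by norm_num : (0:ℝ) < 1/2)
      obtain ⟨n₀, hn₀⟩ := Filter.eventually_atTop.mp this
      refine Set.mem_iUnion.mpr ⟨n₀, ?_⟩
      have : n₀ ≤ (n₀ + 1) * p := by
        calc n₀ ≤ n₀ + 1 := Nat.le_succ _
          _ ≤ (n₀ + 1) * p := Nat.le_mul_of_pos_right _ hp
      exact hn₀ _ this
    obtain ⟨t, ht⟩ := isCompact_univ.elim_finite_subcover U hUopen hcover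
    refine ⟨max (t.sup fun n => n + 1) 1, le_max_right _ _, ?_⟩
    intro A hA
    let c : X := fun i => ⟨A i, hA i⟩
    obtain ⟨n, hnt, hnU⟩ := Set.mem_iUnion₂.mp (ht (Set.mem_univ c))
    refine ⟨n + 1, Nat.le_add_left _ _, ?_, ?_⟩
    · exact le_max_of_le_left (Finset.le_sup (f := fun n => n + 1) hnt)
    · have heq : prodAB (val c) Bb ((n + 1) * p) = prodAB A Bb ((n + 1) * p) :=
        prodAB_congr _ _ _ _ (fun i _ => rfl)
      have : ν (prodAB (val c) Bb ((n + 1) * p)) < 1/2 := hnU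
      rwa [heq] at this
  obtain ⟨K, hK1, hK⟩ := hKex
  have hK0 : 0 < K := hK1
  set D₁ : ℝ := D₀ * ρ ^ (K * p) with hD₁def
  have hD₁0 : 0 < D₁ := by
    apply mul_pos hD₀0
    exact pow_pos (lt_of_lt_of_le one_pos hρ1) _
  -- key estimate at multiples of p
  have key : ∀ m : ℕ, ∀ A : ℕ → Matrix (Fin N) (Fin M) ℝ, (∀ i, A i ∈ 𝒜) →
      ν (prodAB A Bb (m * p)) ≤ D₁ * (1/2 : ℝ) ^ (m / K) := by
    intro m
    induction m using Nat.strong_induction_on with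
    | _ m ih =>
      intro A hA
      by_cases hm : m < K
      · have hdiv : m / K = 0 := Nat.div_eq_of_lt hm
        rw [hdiv, pow_zero, mul_one]
        have h1 := prodAB_add A Bb 0 (m * p)
        simp only [Nat.zero_add] at h1
        have h2 : prodAB A Bb 0 = 1 := rfl
        rw [h2, mul_one] at h1
        rw [h1]
        calc ν (tprodAux A Bb 0 (m * p)) ≤ D₀ * ρ ^ (m * p) :=
              tprodAux_bound ν hnonneg hsub A Bb ρ D₀ hρ0 (fun j => hρ _ (hA j) _) hD₀ 0 _
          _ ≤ D₀ * ρ ^ (K * p) := by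
              apply mul_le_mul_of_nonneg_left _ (le_of_lt hD₀0)
              exact pow_le_pow_right₀ hρ1 (Nat.mul_le_mul_right _ (le_of_lt hm))
          _ = D₁ := rfl
      · push_neg at hm
        obtain ⟨n, hn1, hnK, hν⟩ := hK A hA
        have hnm : n ≤ m := hnK.trans hm
        have hsplit : m * p = n * p + (m - n) * p := by
          rw [← Nat.add_mul, Nat.add_sub_cancel' hnm]
        rw [hsplit, prodAB_add]
        have hshift : tprodAux A Bb (n * p) ((m - n) * p)
            = prodAB (fun i => A (n * p + i)) Bb ((m - n) * p) :=
          tprodAux_shift A hper n ((m - n) * p)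
        have hih : ν (prodAB (fun i => A (n * p + i)) Bb ((m - n) * p))
            ≤ D₁ * (1/2 : ℝ) ^ ((m - n) / K) :=
          ih (m - n) (by omega) _ (fun i => hA _)
        have hdivle : m / K ≤ (m - n) / K + 1 := by
          have h1 : (m - n) / K + 1 = (m - n + K) / K := (Nat.add_div_right _ hK0).symm
          rw [h1]
          exact Nat.div_le_div_right (by omega)
        calc ν (tprodAux A Bb (n * p) ((m - n) * p) * prodAB A Bb (n * p))
            ≤ ν (tprodAux A Bb (n * p) ((m - n) * p)) * ν (prodAB A Bb (n * p)) := hsub _ _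
          _ ≤ (D₁ * (1/2 : ℝ) ^ ((m - n) / K)) * (1/2) := by
              apply mul_le_mul _ (le_of_lt hν) (hnonneg _)
              · positivity
              · rw [hshift]; exact hih
          _ = D₁ * (1/2 : ℝ) ^ ((m - n) / K + 1) := by ring
          _ ≤ D₁ * (1/2 : ℝ) ^ (m / K) := by
              apply mul_le_mul_of_nonneg_left _ (le_of_lt hD₁0)
              exact pow_le_pow_of_le_one (by norm_num) (by norm_num) hdivle
  -- the exponential rate
  set x : ℝ := ((p * K : ℕ) : ℝ) with hxdef
  have hx0 : (0:ℝ) < x := by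
    simp only [hxdef]
    exact_mod_cast Nat.mul_pos hp hK0
  set lam : ℝ := (1/2 : ℝ) ^ (x⁻¹) with hlamdef
  have hlam0 : 0 < lam := Real.rpow_pos_of_pos (by norm_num) _
  have hlam1 : lam < 1 := Real.rpow_lt_one (by norm_num) (by norm_num) (by positivity)
  have hlampow : ∀ n : ℕ, lam ^ n = (1/2 : ℝ) ^ ((n : ℝ) * x⁻¹) := by
    intro n
    rw [mul_comm, Real.rpow_mul (by norm_num : (0:ℝ) ≤ 1/2), hlamdef, Real.rpow_natCast]
  -- bound (1/2)^(n/(p*K)) ≤ 2 * lam^n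
  have hhalf : ∀ n : ℕ, (1/2 : ℝ) ^ (n / (p * K)) ≤ 2 * lam ^ n := by
    intro n
    set t := n / (p * K) with htdef
    have hpK : 0 < p * K := Nat.mul_pos hp hK0
    have e1 : (p * K) * t + n % (p * K) = n := Nat.div_add_mod n (p * K)
    have e2 : n % (p * K) < p * K := Nat.mod_lt _ hpK
    have e3 : n < (p * K) * (t + 1) := by
      calc n = (p * K) * t + n % (p * K) := e1.symm
        _ < (p * K) * t + (p * K) := Nat.add_lt_add_left e2 _
        _ = (p * K) * (t + 1) := (Nat.mul_succ _ _).symm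
    have e4 : (n : ℝ) < x * ((t : ℝ) + 1) := by
      have : ((n : ℕ) : ℝ) < (((p * K) * (t + 1) : ℕ) : ℝ) := by exact_mod_cast e3
      simpa [hxdef, Nat.cast_mul] using this
    have h5 : (n : ℝ) * x⁻¹ - 1 ≤ (t : ℝ) := by
      have h4 : (n : ℝ) / x < (t : ℝ) + 1 := (div_lt_iff₀ hx0).mpr (by linarith [mul_comm x ((t : ℝ) + 1)])
      rw [div_eq_mul_inv] at h4
      linarith
    calc (1/2 : ℝ) ^ t = (1/2 : ℝ) ^ ((t : ℕ) : ℝ) := (Real.rpow_natCast _ t).symm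
      _ ≤ (1/2 : ℝ) ^ ((n : ℝ) * x⁻¹ - 1) :=
          Real.rpow_le_rpow_of_exponent_ge (by norm_num) (by norm_num) h5
      _ = (1/2 : ℝ) ^ ((n : ℝ) * x⁻¹) / (1/2 : ℝ) ^ (1 : ℝ) := Real.rpow_sub (by norm_num) _ _
      _ = 2 * lam ^ n := by rw [hlampow n, Real.rpow_one]; ring
  -- final assembly
  refine ⟨2 * (D₀ * ρ ^ p) * D₁, by positivity, lam, hlam0, hlam1, ?_⟩
  intro A hA n _
  have hq : n = (n / p) * p + n % p := by
    have := Nat.div_add_mod n p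
    have h' : (n / p) * p = p * (n / p) := Nat.mul_comm _ _
    omega
  have hsplit := prodAB_add A Bb ((n / p) * p) (n % p)
  rw [← hq] at hsplit
  rw [hsplit]
  have hb1 : ν (tprodAux A Bb ((n / p) * p) (n % p)) ≤ D₀ * ρ ^ p := by
    calc ν (tprodAux A Bb ((n / p) * p) (n % p)) ≤ D₀ * ρ ^ (n % p) :=
          tprodAux_bound ν hnonneg hsub A Bb ρ D₀ hρ0 (fun j => hρ _ (hA j) _) hD₀ _ _
      _ ≤ D₀ * ρ ^ p := by
          apply mul_le_mul_of_nonneg_left _ (le_of_lt hD₀0)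
          exact pow_le_pow_right₀ hρ1 (le_of_lt (Nat.mod_lt n hp))
  have hb2 : ν (prodAB A Bb ((n / p) * p)) ≤ D₁ * (1/2 : ℝ) ^ (n / (p * K)) := by
    have h := key (n / p) A hA
    rwa [Nat.div_div_eq_div_mul] at h
  calc ν (tprodAux A Bb ((n / p) * p) (n % p) * prodAB A Bb ((n / p) * p))
      ≤ ν (tprodAux A Bb ((n / p) * p) (n % p)) * ν (prodAB A Bb ((n / p) * p)) := hsub _ _
    _ ≤ (D₀ * ρ ^ p) * (D₁ * (1/2 : ℝ) ^ (n / (p * K))) :=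
        mul_le_mul hb1 hb2 (hnonneg _) (by positivity)
    _ ≤ (D₀ * ρ ^ p) * (D₁ * (2 * lam ^ n)) := by
        apply mul_le_mul_of_nonneg_left _ (by positivity)
        exact mul_le_mul_of_nonneg_left (hhalf n) (le_of_lt hD₁0)
    _ = 2 * (D₀ * ρ ^ p) * D₁ * lam ^ n := by ring
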